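/- In the α = 2 fixed-point setup: assume Σ_{i=1}^l w_i w_iᵀ is positive definite, let γ > ξ and 0 < η < 1, let β > 0 satisfy both φ(β) ≤ γ and ψ(β) ≤ η, and suppose β_i ≥ β for all i = 1,…,l. Then for every x ∈ ℝ^n with ‖x‖₁ ≤ γ it holds that ‖f(x)‖₁ ≤ γ and, for every coordinate index j ∈ {1,…,n}, ‖∂f/∂x_j(x)‖₁ ≤ η. -/

import Mathlib

open Real Matrix Filter Topology

/-- The vector `ℓ¹` norm `‖v‖₁ = Σ_j |v_j|`. -/
noncomputable def vecNorm1 {n : ℕ} (v : Fin n → ℝ) : ℝ := ∑ j, |v j|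

/-- The induced matrix `ℓ¹` norm (maximum absolute column sum). -/
noncomputable def matNorm1 {m n : ℕ} (A : Matrix (Fin m) (Fin n) ℝ) : ℝ :=
  ⨆ j, ∑ i, |A i j|

/-- The smallest eigenvalue of a (Hermitian, i.e. real symmetric) matrix. -/
noncomputable def lambdaMin {n : ℕ} (A : Matrix (Fin n) (Fin n) ℝ) : ℝ :=
  if h : A.IsHermitian then ⨅ i, h.eigenvalues i else 0

noncomputable def en2 {n : ℕ} (v : Fin n → ℝ) : ℝ := Real.sqrt (∑ j, v j ^ 2)

lemma en2_nonneg {n : ℕ} (v : Fin n → ℝ) : 0 ≤ en2 v := Real.sqrt_nonneg _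

lemma vecNorm1_nonneg {n : ℕ} (v : Fin n → ℝ) : 0 ≤ vecNorm1 v :=
  Finset.sum_nonneg fun _ _ => abs_nonneg _

lemma en2_le_vecNorm1 {n : ℕ} (v : Fin n → ℝ) : en2 v ≤ vecNorm1 v := by
  rw [en2, show vecNorm1 v = Real.sqrt ((vecNorm1 v)^2) by
    rw [Real.sqrt_sq (vecNorm1_nonneg v)]]
  apply Real.sqrt_le_sqrt
  rw [vecNorm1]
  calc ∑ j, v j ^ 2 = ∑ j, |v j| * |v j| := by
        simp [sq, abs_mul_abs_self]
    _ ≤ (∑ j, |v j|) * ∑ j, |v j| := by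
        rw [Finset.sum_mul]
        apply Finset.sum_le_sum; intro j _
        exact mul_le_mul_of_nonneg_left (Finset.single_le_sum (f := fun j => |v j|)
          (fun _ _ => abs_nonneg _) (Finset.mem_univ j)) (abs_nonneg _)
    _ = (∑ j, |v j|) ^ 2 := (sq _).symm

lemma vecNorm1_le_sqrt_mul_en2 {n : ℕ} (v : Fin n → ℝ) :
    vecNorm1 v ≤ Real.sqrt n * en2 v := by
  have h := Real.sum_mul_le_sqrt_mul_sqrt Finset.univ (fun _ : Fin n => (1:ℝ))
    (fun j => |v j|)
  simpa [vecNorm1, en2, sq_abs] using h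

lemma abs_dot_le_en2 {n : ℕ} (u v : Fin n → ℝ) : |u ⬝ᵥ v| ≤ en2 u * en2 v := by
  have h := Real.sum_mul_le_sqrt_mul_sqrt Finset.univ (fun j => |u j|) (fun j => |v j|)
  simp only [sq_abs] at h
  calc |u ⬝ᵥ v| ≤ ∑ j, |u j * v j| := by
        rw [dotProduct]; exact Finset.abs_sum_le_sum_abs _ _
    _ = ∑ j, |u j| * |v j| := by simp [abs_mul]
    _ ≤ en2 u * en2 v := h

lemma en2_smul {n : ℕ} (c : ℝ) (v : Fin n → ℝ) :
    en2 (fun j => c * v j) = |c| * en2 v := by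
  simp only [en2, mul_pow]
  rw [← Finset.mul_sum, Real.sqrt_mul (sq_nonneg c), Real.sqrt_sq_eq_abs]

lemma abs_dot_le_norm1 {n : ℕ} (u v : Fin n → ℝ) :
    |u ⬝ᵥ v| ≤ vecNorm1 u * vecNorm1 v := by
  calc |u ⬝ᵥ v| ≤ ∑ j, |u j * v j| := by
        rw [dotProduct]; exact Finset.abs_sum_le_sum_abs _ _
    _ = ∑ j, |u j| * |v j| := by simp [abs_mul]
    _ ≤ ∑ j, |u j| * vecNorm1 v := by
        apply Finset.sum_le_sum; intro j _
        exact mul_le_mul_of_nonneg_left (Finset.single_le_sum (f := fun j => |v j|)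
          (fun _ _ => abs_nonneg _) (Finset.mem_univ j)) (abs_nonneg _)
    _ = vecNorm1 u * vecNorm1 v := by rw [vecNorm1, vecNorm1, ← Finset.sum_mul]

/-- Triangle inequality for the Euclidean norm of a finite sum of vectors. -/
lemma en2_sum_le {n l : ℕ} (u : Fin l → Fin n → ℝ) :
    en2 (fun j => ∑ i, u i j) ≤ ∑ i, en2 (u i) := by
  induction l with
  | zero => simp [en2]
  | succ m ih =>
      have h1 : (fun j => ∑ i : Fin (m+1), u i j) =
          fun j => (∑ i : Fin m, u i.succ j) + u 0 j := by
        funext j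
        rw [Fin.sum_univ_succ]
        ring
      rw [h1]
      have tri : en2 (fun j => (∑ i : Fin m, u i.succ j) + u 0 j) ≤
          en2 (fun j => ∑ i : Fin m, u i.succ j) + en2 (u 0) := by
        set a : EuclideanSpace ℝ (Fin n) := WithLp.toLp 2 (fun j => ∑ i : Fin m, u i.succ j)
        set b : EuclideanSpace ℝ (Fin n) := WithLp.toLp 2 (u 0)
        have hna : en2 (fun j => ∑ i : Fin m, u i.succ j) = ‖a‖ := by
          rw [EuclideanSpace.norm_eq]; simp [en2, a]
        have hnb : en2 (u 0) = ‖b‖ := by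
          rw [EuclideanSpace.norm_eq]; simp [en2, b]
        have hnab : en2 (fun j => (∑ i : Fin m, u i.succ j) + u 0 j) = ‖a + b‖ := by
          rw [EuclideanSpace.norm_eq]
          simp only [en2]
          congr 1
          apply Finset.sum_congr rfl
          intro j _
          have : (a + b) j = (∑ i : Fin m, u i.succ j) + u 0 j := rfl
          rw [this]
          simp [sq_abs]
        rw [hna, hnb, hnab]
        exact norm_add_le a b
      calc en2 (fun j => (∑ i : Fin m, u i.succ j) + u 0 j)
          ≤ en2 (fun j => ∑ i : Fin m, u i.succ j) + en2 (u 0) := tri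
        _ ≤ (∑ i : Fin m, en2 (u i.succ)) + en2 (u 0) := by
            exact add_le_add_left (ih fun i => u i.succ) _
        _ = ∑ i : Fin (m+1), en2 (u i) := by rw [Fin.sum_univ_succ]; ring

lemma en2_sum_smul_le {n l : ℕ} (c : Fin l → ℝ) (u : Fin l → Fin n → ℝ) :
    en2 (fun j => ∑ i, c i * u i j) ≤ ∑ i, |c i| * en2 (u i) := by
  calc en2 (fun j => ∑ i, c i * u i j) ≤ ∑ i, en2 (fun j => c i * u i j) :=
        en2_sum_le _
    _ = ∑ i, |c i| * en2 (u i) := by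
        apply Finset.sum_congr rfl; intro i _; exact en2_smul _ _

lemma vecMulVec_mulVec' {n : ℕ} (u v x : Fin n → ℝ) :
    vecMulVec u v *ᵥ x = (v ⬝ᵥ x) • u := by
  funext k
  simp only [vecMulVec, mulVec, dotProduct, Pi.smul_apply, smul_eq_mul,
    Matrix.of_apply, Finset.mul_sum, Finset.sum_mul]
  apply Finset.sum_congr rfl
  intros; ring

lemma quadform_weighted {n l : ℕ} (c : Fin l → ℝ) (w : Fin l → Fin n → ℝ)
    (x : Fin n → ℝ) :
    x ⬝ᵥ (∑ i, c i • vecMulVec (w i) (w i)) *ᵥ x = ∑ i, c i * (w i ⬝ᵥ x) ^ 2 := by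
  have h1 : (∑ i, c i • vecMulVec (w i) (w i)) *ᵥ x
      = ∑ i, (c i * (w i ⬝ᵥ x)) • w i := by
    induction l with
    | zero => simp [mulVec, dotProduct]
    | succ m ih =>
        rw [Fin.sum_univ_succ, Fin.sum_univ_succ, Matrix.add_mulVec,
          ih (fun i => c i.succ) (fun i => w i.succ), smul_mulVec,
          vecMulVec_mulVec']
        rw [smul_smul]
  rw [h1]
  have h2 : x ⬝ᵥ (∑ i, (c i * (w i ⬝ᵥ x)) • w i) = ∑ i, (c i * (w i ⬝ᵥ x)) * (x ⬝ᵥ w i) := by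
    simp only [dotProduct, Finset.sum_apply, Pi.smul_apply, smul_eq_mul, Finset.mul_sum,
      Finset.sum_mul]
    rw [Finset.sum_comm]
    apply Finset.sum_congr rfl
    intro i _
    apply Finset.sum_congr rfl
    intro k _
    apply Finset.sum_congr rfl
    intros; ring
  rw [h2]
  apply Finset.sum_congr rfl
  intro i _
  rw [dotProduct_comm]
  ring

lemma quadform_unweighted {n l : ℕ} (w : Fin l → Fin n → ℝ) (x : Fin n → ℝ) :
    x ⬝ᵥ (∑ i, vecMulVec (w i) (w i)) *ᵥ x = ∑ i, (w i ⬝ᵥ x) ^ 2 := by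
  have := quadform_weighted (fun _ : Fin l => (1:ℝ)) w x
  simpa using this

lemma posdef_weighted {n l : ℕ} (c : Fin l → ℝ) (hc : ∀ i, 0 < c i)
    (w : Fin l → Fin n → ℝ) (hpos : (∑ i, vecMulVec (w i) (w i)).PosDef) :
    (∑ i, c i • vecMulVec (w i) (w i)).PosDef := by
  rw [posDef_iff_dotProduct_mulVec]
  constructor
  · show _ = _
    ext i j
    simp only [conjTranspose_apply, Matrix.sum_apply, Pi.smul_apply, vecMulVec_apply,
      smul_eq_mul, star_trivial]
    apply Finset.sum_congr rfl
    intros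
    simp only [Matrix.smul_apply, vecMulVec_apply, smul_eq_mul]
    ring
  · intro x hx
    have h0 := hpos.dotProduct_mulVec_pos hx
    rw [star_trivial] at h0 ⊢
    rw [quadform_unweighted] at h0
    rw [quadform_weighted]
    obtain ⟨i, hi⟩ : ∃ i, (w i ⬝ᵥ x) ^ 2 ≠ 0 := by
      by_contra h
      push_neg at h
      rw [Finset.sum_congr rfl fun i _ => h i, Finset.sum_const, smul_zero] at h0
      exact lt_irrefl 0 h0
    have hi' : 0 < c i * (w i ⬝ᵥ x) ^ 2 :=
      mul_pos (hc i) ((sq_nonneg _).lt_of_ne (Ne.symm hi))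
    exact hi'.trans_le (Finset.single_le_sum
      (f := fun k => c k * (w k ⬝ᵥ x) ^ 2)
      (fun k _ => mul_nonneg (hc k).le (sq_nonneg _)) (Finset.mem_univ i))

lemma lambdaMin_mul_le_quadform {n : ℕ} (A : Matrix (Fin n) (Fin n) ℝ)
    (hA : A.IsHermitian) (v : Fin n → ℝ) :
    lambdaMin A * (∑ j, v j ^ 2) ≤ v ⬝ᵥ A *ᵥ v := by
  rw [lambdaMin, dif_pos hA]
  set U : Matrix (Fin n) (Fin n) ℝ := (hA.eigenvectorUnitary : Matrix (Fin n) (Fin n) ℝ)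
  have hUmem := hA.eigenvectorUnitary.2
  have hUU : U * star U = 1 := (Matrix.mem_unitaryGroup_iff).mp hUmem
  have hD : A = U * Matrix.diagonal hA.eigenvalues * star U := by
    have := hA.spectral_theorem
    simpa [Function.comp] using this
  have hT : star U = Uᵀ := by
    rw [Matrix.star_eq_conjTranspose, Matrix.conjTranspose_eq_transpose_of_trivial]
  have hUUT : U * Uᵀ = 1 := by rw [← hT]; exact hUU
  set u : Fin n → ℝ := star U *ᵥ v with hu
  have hvU : v ᵥ* U = u := by rw [hu, hT, Matrix.mulVec_transpose]
  have hsum : ∑ j, u j ^ 2 = ∑ j, v j ^ 2 := by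
    have h1 : u ⬝ᵥ u = v ⬝ᵥ v := by
      calc u ⬝ᵥ u = u ⬝ᵥ (Uᵀ *ᵥ v) := by rw [← hT, ← hu]
        _ = (u ᵥ* Uᵀ) ⬝ᵥ v := Matrix.dotProduct_mulVec _ _ _
        _ = (U *ᵥ u) ⬝ᵥ v := by rw [Matrix.vecMul_transpose]
        _ = ((U * Uᵀ) *ᵥ v) ⬝ᵥ v := by
            conv_lhs => rw [hu, hT, Matrix.mulVec_mulVec]
        _ = v ⬝ᵥ v := by rw [hUUT, Matrix.one_mulVec]
    simpa [dotProduct, sq] using h1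
  have hquad : v ⬝ᵥ A *ᵥ v = ∑ j, hA.eigenvalues j * u j ^ 2 := by
    calc v ⬝ᵥ A *ᵥ v
        = v ⬝ᵥ ((U * Matrix.diagonal hA.eigenvalues * star U) *ᵥ v) := by rw [← hD]
      _ = v ⬝ᵥ (U *ᵥ (Matrix.diagonal hA.eigenvalues *ᵥ u)) := by
          rw [← Matrix.mulVec_mulVec, ← Matrix.mulVec_mulVec, hu]
      _ = (v ᵥ* U) ⬝ᵥ (Matrix.diagonal hA.eigenvalues *ᵥ u) :=
          Matrix.dotProduct_mulVec _ _ _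
      _ = u ⬝ᵥ (Matrix.diagonal hA.eigenvalues *ᵥ u) := by rw [hvU]
      _ = ∑ j, hA.eigenvalues j * u j ^ 2 := by
          simp only [dotProduct, Matrix.mulVec_diagonal]
          apply Finset.sum_congr rfl
          intros; ring
  rw [hquad, ← hsum, Finset.mul_sum]
  apply Finset.sum_le_sum
  intro j _
  apply mul_le_mul_of_nonneg_right _ (sq_nonneg _)
  exact ciInf_le (Finite.bddBelow_range _) j

lemma lambdaMin_pos {n : ℕ} (hn : 0 < n) (A : Matrix (Fin n) (Fin n) ℝ)
    (hA : A.PosDef) : 0 < lambdaMin A := by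
  rw [lambdaMin, dif_pos hA.1]
  have : Nonempty (Fin n) := ⟨⟨0, hn⟩⟩
  obtain ⟨i, hi⟩ := exists_eq_ciInf_of_finite (f := fun i => hA.1.eigenvalues i)
  rw [← hi]
  exact hA.eigenvalues_pos i

lemma solve_bound {n : ℕ} (A : Matrix (Fin n) (Fin n) ℝ) (lam : ℝ) (hlam : 0 < lam)
    (hquad : ∀ v : Fin n → ℝ, lam * (∑ j, v j ^ 2) ≤ v ⬝ᵥ A *ᵥ v)
    (q p : Fin n → ℝ) (hqp : A *ᵥ q = p) : en2 q ≤ en2 p / lam := by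
  have hq2 : ∑ j, q j ^ 2 = (en2 q) ^ 2 := by
    rw [en2, Real.sq_sqrt (Finset.sum_nonneg fun _ _ => sq_nonneg _)]
  have key : lam * (en2 q) ^ 2 ≤ en2 q * en2 p := by
    calc lam * (en2 q) ^ 2 = lam * ∑ j, q j ^ 2 := by rw [hq2]
      _ ≤ q ⬝ᵥ A *ᵥ q := hquad q
      _ = q ⬝ᵥ p := by rw [hqp]
      _ ≤ |q ⬝ᵥ p| := le_abs_self _
      _ ≤ en2 q * en2 p := abs_dot_le_en2 _ _
  rcases eq_or_lt_of_le (en2_nonneg q) with h0 | h0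
  · rw [← h0]
    exact div_nonneg (en2_nonneg p) hlam.le
  · rw [le_div_iff₀ hlam]
    have := (mul_le_mul_iff_of_pos_right h0).mp (by linarith [key] : lam * en2 q * en2 q ≤ en2 p * en2 q)
    linarith [this]

lemma col_le_matNorm1 {n : ℕ} (w : Fin n → ℝ) (k : Fin n) :
    |w k| * vecNorm1 w ≤ matNorm1 (vecMulVec w w) := by
  have h1 : |w k| * vecNorm1 w = ∑ i, |vecMulVec w w i k| := by
    rw [vecNorm1, Finset.mul_sum]
    apply Finset.sum_congr rfl
    intro i _
    rw [vecMulVec_apply, abs_mul]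
    ring
  rw [h1]
  exact le_ciSup (f := fun j => ∑ i, |vecMulVec w w i j|) (Finite.bddAbove_range _) k

section DerivMachinery

attribute [local instance] Matrix.linftyOpNormedRing Matrix.linftyOpNormedAlgebra

variable {n : ℕ}

/-- dot product with a fixed vector as a continuous linear map. -/
noncomputable def dotCLM (w : Fin n → ℝ) : (Fin n → ℝ) →L[ℝ] ℝ :=
  LinearMap.toContinuousLinearMap
    { toFun := fun x => w ⬝ᵥ x
      map_add' := fun a b => by simp [dotProduct_add]
      map_smul' := fun c a => by simp [dotProduct_smul] }

@[simp] lemma dotCLM_apply (w v : Fin n → ℝ) : dotCLM w v = w ⬝ᵥ v := rfl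

lemma hasFDerivAt_dot (w : Fin n → ℝ) (x : Fin n → ℝ) :
    HasFDerivAt (fun y => w ⬝ᵥ y) (dotCLM w) x :=
  (dotCLM w).hasFDerivAt

/-- `mulVec` as a continuous bilinear map. -/
noncomputable def mulVecCLM2 :
    Matrix (Fin n) (Fin n) ℝ →L[ℝ] (Fin n → ℝ) →L[ℝ] (Fin n → ℝ) :=
  LinearMap.toContinuousLinearMap
    { toFun := fun A => LinearMap.toContinuousLinearMap (Matrix.mulVecLin A)
      map_add' := fun A B => by
        ext v
        simp [Matrix.add_mulVec]
      map_smul' := fun c A => by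
        ext v
        simp [Matrix.smul_mulVec] }

@[simp] lemma mulVecCLM2_apply (A : Matrix (Fin n) (Fin n) ℝ) (v : Fin n → ℝ) :
    mulVecCLM2 A v = A *ᵥ v := rfl

lemma isBoundedBilinearMap_mulVec :
    IsBoundedBilinearMap ℝ
      (fun p : Matrix (Fin n) (Fin n) ℝ × (Fin n → ℝ) => p.1 *ᵥ p.2) := by
  have h := (mulVecCLM2 (n := n)).isBoundedBilinearMap
  convert h using 2 <;> rfl

end DerivMachinery

noncomputable def gW {n : ℕ} (w : Fin n → ℝ) (ti b : ℝ) (x : Fin n → ℝ) : ℝ :=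
  Real.exp (-((ti - w ⬝ᵥ x) ^ 2 / b ^ 2))

noncomputable def Rmat {n l : ℕ} (w : Fin l → Fin n → ℝ) (t βi : Fin l → ℝ)
    (x : Fin n → ℝ) : Matrix (Fin n) (Fin n) ℝ :=
  ∑ i, gW (w i) (t i) (βi i) x • vecMulVec (w i) (w i)

noncomputable def Pvec {n l : ℕ} (w : Fin l → Fin n → ℝ) (t βi : Fin l → ℝ)
    (x : Fin n → ℝ) : Fin n → ℝ :=
  ∑ i, (gW (w i) (t i) (βi i) x * t i) • w i

noncomputable def coefC {n l : ℕ} (w : Fin l → Fin n → ℝ) (t βi : Fin l → ℝ)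
    (x : Fin n → ℝ) (i : Fin l) : ℝ :=
  2 * gW (w i) (t i) (βi i) x * (t i - w i ⬝ᵥ x) / βi i ^ 2

lemma sum_smul_vecMulVec_mulVec {n l : ℕ} (c : Fin l → ℝ) (w : Fin l → Fin n → ℝ)
    (x : Fin n → ℝ) :
    (∑ i, c i • vecMulVec (w i) (w i)) *ᵥ x = ∑ i, (c i * (w i ⬝ᵥ x)) • w i := by
  induction l with
  | zero => simp [mulVec, dotProduct]
  | succ m ih =>
      rw [Fin.sum_univ_succ, Fin.sum_univ_succ, Matrix.add_mulVec,
        ih (fun i => c i.succ) (fun i => w i.succ), smul_mulVec,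
        vecMulVec_mulVec']
      rw [smul_smul]

section FderivEval

attribute [local instance] Matrix.linftyOpNormedRing Matrix.linftyOpNormedAlgebra

lemma hasFDerivAt_gW {n : ℕ} (w : Fin n → ℝ) (ti b : ℝ) (x : Fin n → ℝ) :
    HasFDerivAt (gW w ti b)
      ((2 * gW w ti b x * (ti - w ⬝ᵥ x) / b ^ 2) • dotCLM w) x := by
  have hfun : gW w ti b = fun y => Real.exp (-((ti - w ⬝ᵥ y) * (ti - w ⬝ᵥ y) * (b ^ 2)⁻¹)) := by
    funext y; simp [gW, sq, div_eq_mul_inv]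
  rw [hfun]
  have hsub := (hasFDerivAt_const ti x).fun_sub (hasFDerivAt_dot w x)
  have h := (((hsub.fun_mul hsub).mul_const ((b ^ 2)⁻¹)).fun_neg).exp
  refine h.congr_fderiv ?_
  ext v
  simp only [ContinuousLinearMap.smul_apply, dotCLM_apply, smul_eq_mul,
    ContinuousLinearMap.neg_apply,
    ContinuousLinearMap.add_apply, ContinuousLinearMap.sub_apply,
    ContinuousLinearMap.zero_apply]
  ring

lemma hasFDerivAt_Rmat {n l : ℕ} (w : Fin l → Fin n → ℝ) (t βi : Fin l → ℝ)
    (x : Fin n → ℝ) :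
    HasFDerivAt (Rmat w t βi)
      (∑ i, ((coefC w t βi x i) • dotCLM (w i)).smulRight (vecMulVec (w i) (w i))) x := by
  apply HasFDerivAt.fun_sum
  intro i _
  exact (hasFDerivAt_gW (w i) (t i) (βi i) x).smul_const (vecMulVec (w i) (w i))

lemma hasFDerivAt_Pvec {n l : ℕ} (w : Fin l → Fin n → ℝ) (t βi : Fin l → ℝ)
    (x : Fin n → ℝ) :
    HasFDerivAt (Pvec w t βi)
      (∑ i, ((t i) • ((coefC w t βi x i) • dotCLM (w i))).smulRight (w i)) x := by
  apply HasFDerivAt.fun_sum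
  intro i _
  exact ((hasFDerivAt_gW (w i) (t i) (βi i) x).mul_const (t i)).smul_const (w i)

lemma fderiv_eval {n l : ℕ} (w : Fin l → Fin n → ℝ) (t βi : Fin l → ℝ)
    (x : Fin n → ℝ) (hx : IsUnit (Rmat w t βi x)) (j : Fin n) :
    fderiv ℝ (fun y => (Rmat w t βi y)⁻¹ *ᵥ Pvec w t βi y) x (Pi.single j 1)
      = (Rmat w t βi x)⁻¹ *ᵥ
        (∑ i, (coefC w t βi x i * w i j *
          (t i - w i ⬝ᵥ ((Rmat w t βi x)⁻¹ *ᵥ Pvec w t βi x))) • w i) := by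
  have hR := hasFDerivAt_Rmat w t βi x
  have hP := hasFDerivAt_Pvec w t βi x
  set R' := ∑ i, ((coefC w t βi x i) • dotCLM (w i)).smulRight (vecMulVec (w i) (w i))
    with hR'def
  set P' := ∑ i, ((t i) • ((coefC w t βi x i) • dotCLM (w i))).smulRight (w i) with hP'def
  have h1 : HasFDerivAt Ring.inverse
      (-(ContinuousLinearMap.mulLeftRight ℝ _ (↑hx.unit⁻¹) (↑hx.unit⁻¹)))
      (Rmat w t βi x) := by
    have := hasFDerivAt_ringInverse (𝕜 := ℝ) hx.unit
    rwa [hx.unit_spec] at this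
  have h2 := h1.comp x hR
  have hRinv : HasFDerivAt (fun y => (Rmat w t βi y)⁻¹)
      ((-(ContinuousLinearMap.mulLeftRight ℝ _ (↑hx.unit⁻¹) (↑hx.unit⁻¹))).comp R') x := by
    have hfun : (fun y => (Rmat w t βi y)⁻¹) = Ring.inverse ∘ (Rmat w t βi) := by
      funext y; exact Matrix.nonsing_inv_eq_ringInverse _
    rw [hfun]; exact h2
  have hB := isBoundedBilinearMap_mulVec (n := n)
  have hf0 := (hB.hasFDerivAt ((Rmat w t βi x)⁻¹, Pvec w t βi x)).comp x (hRinv.prodMk hP)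
  have hf : HasFDerivAt (fun y => (Rmat w t βi y)⁻¹ *ᵥ Pvec w t βi y)
      ((hB.deriv ((Rmat w t βi x)⁻¹, Pvec w t βi x)).comp
        (((-(ContinuousLinearMap.mulLeftRight ℝ _ (↑hx.unit⁻¹) (↑hx.unit⁻¹))).comp R').prod P'))
      x := hf0
  rw [hf.fderiv]
  have hcoe : (↑hx.unit⁻¹ : Matrix (Fin n) (Fin n) ℝ) = (Rmat w t βi x)⁻¹ := by
    rw [Matrix.coe_units_inv, hx.unit_spec]
  have hR'v : R' (Pi.single j 1) =
      ∑ i, (coefC w t βi x i * w i j) • vecMulVec (w i) (w i) := by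
    simp [hR'def, ContinuousLinearMap.sum_apply, ContinuousLinearMap.smulRight_apply,
      dotProduct_single]
  simp only [ContinuousLinearMap.comp_apply, ContinuousLinearMap.prod_apply,
    ContinuousLinearMap.neg_apply, ContinuousLinearMap.mulLeftRight_apply, hcoe,
    IsBoundedBilinearMap.deriv_apply, hP'def,
    ContinuousLinearMap.sum_apply, ContinuousLinearMap.smulRight_apply,
    ContinuousLinearMap.smul_apply, dotCLM_apply, dotProduct_single, mul_one,
    smul_eq_mul]
  erw [ContinuousLinearMap.comp_apply, hR'v]
  simp only [ContinuousLinearMap.comp_apply, ContinuousLinearMap.prod_apply,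
    ContinuousLinearMap.neg_apply, ContinuousLinearMap.mulLeftRight_apply, hcoe,
    IsBoundedBilinearMap.deriv_apply, hR'def, hP'def,
    ContinuousLinearMap.sum_apply, ContinuousLinearMap.smulRight_apply,
    ContinuousLinearMap.smul_apply, dotCLM_apply, dotProduct_single, mul_one,
    smul_eq_mul]
  rw [Matrix.neg_mulVec, ← Matrix.mulVec_mulVec, ← Matrix.mulVec_mulVec,
    ← sub_eq_add_neg, ← Matrix.mulVec_sub]
  rw [sum_smul_vecMulVec_mulVec, ← Finset.sum_sub_distrib]
  refine congrArg (fun z => (Rmat w t βi x)⁻¹ *ᵥ z) ?_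
  apply Finset.sum_congr rfl
  intro i _
  rw [← sub_smul]
  congr 1
  ring
end FderivEval

lemma gW_le_one {n : ℕ} (w : Fin n → ℝ) (ti b : ℝ) (x : Fin n → ℝ) :
    gW w ti b x ≤ 1 := by
  rw [gW]
  apply Real.exp_le_one_iff.mpr
  rw [neg_nonpos]
  positivity

lemma gW_pos {n : ℕ} (w : Fin n → ℝ) (ti b : ℝ) (x : Fin n → ℝ) :
    0 < gW w ti b x := Real.exp_pos _

lemma abs_err_le {n : ℕ} (w : Fin n → ℝ) (ti γ : ℝ) (x : Fin n → ℝ)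
    (hx : vecNorm1 x ≤ γ) : |ti - w ⬝ᵥ x| ≤ |ti| + γ * vecNorm1 w := by
  calc |ti - w ⬝ᵥ x| ≤ |ti| + |w ⬝ᵥ x| := abs_sub _ _
    _ ≤ |ti| + vecNorm1 w * vecNorm1 x := by
        exact add_le_add_right (abs_dot_le_norm1 w x) _
    _ ≤ |ti| + γ * vecNorm1 w := by
        have h := mul_le_mul_of_nonneg_left hx (vecNorm1_nonneg w)
        nlinarith [vecNorm1_nonneg w]

/-- In the `α = 2` fixed-point setup with `Σ_i w_i w_iᵀ ≻ 0`, if `γ > ξ`,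
`0 < η < 1`, `β > 0` satisfies `φ(β) ≤ γ` and `ψ(β) ≤ η`, and `β_i ≥ β` for all `i`,
then for every `x` with `‖x‖₁ ≤ γ` one has `‖f(x)‖₁ ≤ γ` and, for every coordinate
`j`, `‖∂f/∂x_j(x)‖₁ ≤ η`. -/
theorem fixed_point_map_contraction_bounds
    {n l : ℕ} (w : Fin l → Fin n → ℝ) (t : Fin l → ℝ)
    (βi : Fin l → ℝ) (hβi : ∀ i, 0 < βi i)
    (hposdef : (∑ i, vecMulVec (w i) (w i)).PosDef)
    (e : (Fin n → ℝ) → Fin l → ℝ) (he : e = fun x i => t i - w i ⬝ᵥ x)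
    (R : (Fin n → ℝ) → Matrix (Fin n) (Fin n) ℝ)
    (hR : R = fun x => ∑ i, Real.exp (-((e x i) ^ 2 / (βi i) ^ 2)) • vecMulVec (w i) (w i))
    (P : (Fin n → ℝ) → (Fin n → ℝ))
    (hP : P = fun x => ∑ i, (Real.exp (-((e x i) ^ 2 / (βi i) ^ 2)) * t i) • w i)
    (f : (Fin n → ℝ) → (Fin n → ℝ)) (hf : f = fun x => (R x)⁻¹.mulVec (P x))
    (ξ : ℝ)
    (hξ : ξ = Real.sqrt n * (∑ i, vecNorm1 (w i) * |t i|) /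
        lambdaMin (∑ i, vecMulVec (w i) (w i)))
    (γ : ℝ) (hγ : ξ < γ)
    (η : ℝ) (hη0 : 0 < η) (hη1 : η < 1)
    (φ : ℝ → ℝ)
    (hφ : φ = fun b => Real.sqrt n * (∑ i, vecNorm1 (w i) * |t i|) /
        lambdaMin (∑ i, Real.exp (-((γ * vecNorm1 (w i) + |t i|) ^ 2 / b ^ 2)) •
          vecMulVec (w i) (w i)))
    (ψ : ℝ → ℝ)
    (hψ : ψ = fun b => 2 * Real.sqrt n *
        (∑ i, (|t i| + γ * vecNorm1 (w i)) * vecNorm1 (w i) *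
          (γ * matNorm1 (vecMulVec (w i) (w i)) + |t i| * vecNorm1 (w i))) /
        (b ^ 2 * lambdaMin (∑ i, Real.exp (-((γ * vecNorm1 (w i) + |t i|) ^ 2 / b ^ 2)) •
          vecMulVec (w i) (w i))))
    (β : ℝ) (hβ : 0 < β) (hφβ : φ β ≤ γ) (hψβ : ψ β ≤ η) (hββi : ∀ i, β ≤ βi i) :
    ∀ x : Fin n → ℝ, vecNorm1 x ≤ γ →
      vecNorm1 (f x) ≤ γ ∧
      ∀ j : Fin n, vecNorm1 (fderiv ℝ f x (Pi.single j 1)) ≤ η := by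
  subst he hR hP hf hξ hφ hψ
  intro x hx
  simp only at hφβ hψβ
  have hγ0 : 0 ≤ γ := le_trans (vecNorm1_nonneg x) hx
  rcases Nat.eq_zero_or_pos n with hn | hn
  · subst hn
    refine ⟨?_, fun j => j.elim0⟩
    calc vecNorm1 _ = 0 := by simp [vecNorm1]
      _ ≤ γ := hγ0
  haveI : Nonempty (Fin n) := ⟨⟨0, hn⟩⟩
  set M : Matrix (Fin n) (Fin n) ℝ :=
    ∑ i, Real.exp (-((γ * vecNorm1 (w i) + |t i|) ^ 2 / β ^ 2)) • vecMulVec (w i) (w i)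
    with hMdef
  have hMpos : M.PosDef :=
    posdef_weighted _ (fun i => Real.exp_pos _) w hposdef
  have hlam : 0 < lambdaMin M := lambdaMin_pos hn M hMpos
  have hRpos : (Rmat w t βi x).PosDef :=
    posdef_weighted _ (fun i => gW_pos _ _ _ _) w hposdef
  have hdet : IsUnit (Rmat w t βi x).det := isUnit_iff_ne_zero.mpr hRpos.det_pos.ne'
  have hunit : IsUnit (Rmat w t βi x) := (Matrix.isUnit_iff_isUnit_det _).mpr hdet
  have hquadR : ∀ v : Fin n → ℝ,
      lambdaMin M * (∑ j, v j ^ 2) ≤ v ⬝ᵥ (Rmat w t βi x) *ᵥ v := by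
    intro v
    refine (lambdaMin_mul_le_quadform M hMpos.1 v).trans ?_
    rw [hMdef, quadform_weighted]
    rw [show Rmat w t βi x = ∑ i, gW (w i) (t i) (βi i) x • vecMulVec (w i) (w i) from rfl,
      quadform_weighted]
    apply Finset.sum_le_sum
    intro i _
    apply mul_le_mul_of_nonneg_right _ (sq_nonneg _)
    rw [gW]
    apply Real.exp_le_exp.mpr
    apply neg_le_neg
    have habs : |t i - w i ⬝ᵥ x| ≤ |t i| + γ * vecNorm1 (w i) := abs_err_le _ _ _ _ hx
    have hsq : (t i - w i ⬝ᵥ x) ^ 2 ≤ (γ * vecNorm1 (w i) + |t i|) ^ 2 := by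
      rw [← sq_abs (t i - w i ⬝ᵥ x)]
      apply pow_le_pow_left₀ (abs_nonneg _)
      linarith
    have hβ2 : β ^ 2 ≤ βi i ^ 2 := pow_le_pow_left₀ hβ.le (hββi i) 2
    exact div_le_div₀ (sq_nonneg _) hsq (by positivity) hβ2
  -- the fixed-point value
  have hfx : Rmat w t βi x *ᵥ ((Rmat w t βi x)⁻¹ *ᵥ Pvec w t βi x) = Pvec w t βi x := by
    rw [Matrix.mulVec_mulVec, Matrix.mul_nonsing_inv _ hdet, Matrix.one_mulVec]
  have hPbound : en2 (Pvec w t βi x) ≤ ∑ i, vecNorm1 (w i) * |t i| := by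
    have hPeq : Pvec w t βi x = fun k => ∑ i, (gW (w i) (t i) (βi i) x * t i) * w i k := by
      funext k
      rw [Pvec]
      rw [Finset.sum_apply]
      apply Finset.sum_congr rfl
      intros; simp
    rw [hPeq]
    refine (en2_sum_smul_le _ _).trans ?_
    apply Finset.sum_le_sum
    intro i _
    rw [abs_mul, abs_of_pos (gW_pos _ _ _ _)]
    calc gW (w i) (t i) (βi i) x * |t i| * en2 (w i)
        ≤ 1 * |t i| * vecNorm1 (w i) := by
          apply mul_le_mul (mul_le_mul_of_nonneg_right (gW_le_one _ _ _ _) (abs_nonneg _))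
            (en2_le_vecNorm1 _) (en2_nonneg _)
          positivity
      _ = vecNorm1 (w i) * |t i| := by ring
  have hen2fx : en2 ((Rmat w t βi x)⁻¹ *ᵥ Pvec w t βi x) ≤
      en2 (Pvec w t βi x) / lambdaMin M :=
    solve_bound _ _ hlam hquadR _ _ hfx
  have part1 : vecNorm1 ((Rmat w t βi x)⁻¹ *ᵥ Pvec w t βi x) ≤ γ := by
    refine le_trans (vecNorm1_le_sqrt_mul_en2 _) (le_trans ?_ hφβ)
    rw [show Real.sqrt ↑n * (∑ i, vecNorm1 (w i) * |t i|) / lambdaMin M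
      = Real.sqrt ↑n * ((∑ i, vecNorm1 (w i) * |t i|) / lambdaMin M) from mul_div_assoc _ _ _]
    apply mul_le_mul_of_nonneg_left _ (Real.sqrt_nonneg _)
    refine hen2fx.trans ?_
    exact (div_le_div_iff_of_pos_right hlam).mpr hPbound
  constructor
  · exact part1
  intro j
  show vecNorm1 (fderiv ℝ (fun y => (Rmat w t βi y)⁻¹ *ᵥ Pvec w t βi y) x
    (Pi.single j 1)) ≤ η
  rw [fderiv_eval w t βi x hunit j]
  set fx := (Rmat w t βi x)⁻¹ *ᵥ Pvec w t βi x with hfxdef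
  set p2 : Fin n → ℝ := ∑ i, (coefC w t βi x i * w i j * (t i - w i ⬝ᵥ fx)) • w i with hp2def
  have hqp2 : Rmat w t βi x *ᵥ ((Rmat w t βi x)⁻¹ *ᵥ p2) = p2 := by
    rw [Matrix.mulVec_mulVec, Matrix.mul_nonsing_inv _ hdet, Matrix.one_mulVec]
  have hen2q : en2 ((Rmat w t βi x)⁻¹ *ᵥ p2) ≤ en2 p2 / lambdaMin M :=
    solve_bound _ _ hlam hquadR _ _ hqp2
  have hmatN : ∀ i : Fin l, 0 ≤ matNorm1 (vecMulVec (w i) (w i)) := by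
    intro i
    refine le_trans ?_ (col_le_matNorm1 (w i) ⟨0, hn⟩)
    exact mul_nonneg (abs_nonneg _) (vecNorm1_nonneg _)
  have hp2bound : en2 p2 ≤ ∑ i, 2 * ((|t i| + γ * vecNorm1 (w i)) * vecNorm1 (w i) *
      (γ * matNorm1 (vecMulVec (w i) (w i)) + |t i| * vecNorm1 (w i))) / β ^ 2 := by
    have hp2eq : p2 = fun k => ∑ i, (coefC w t βi x i * w i j * (t i - w i ⬝ᵥ fx)) * w i k := by
      funext k
      rw [hp2def, Finset.sum_apply]
      apply Finset.sum_congr rfl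
      intros; simp
    rw [hp2eq]
    refine (en2_sum_smul_le _ _).trans ?_
    apply Finset.sum_le_sum
    intro i _
    -- bound each term
    have hwn : 0 ≤ vecNorm1 (w i) := vecNorm1_nonneg _
    have hA : 0 ≤ |t i| + γ * vecNorm1 (w i) := by
      have h1 := mul_nonneg hγ0 hwn
      have h2 := abs_nonneg (t i)
      linarith
    have hc1 : |coefC w t βi x i * w i j| ≤
        2 * (|t i| + γ * vecNorm1 (w i)) * vecNorm1 (w i) / β ^ 2 := by
      rw [abs_mul, coefC, abs_div, abs_of_nonneg (sq_nonneg (βi i)), abs_mul, abs_mul,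
        abs_two, abs_of_pos (gW_pos _ _ _ _)]
      have he1 : |t i - w i ⬝ᵥ x| ≤ |t i| + γ * vecNorm1 (w i) := abs_err_le _ _ _ _ hx
      have hwj : |w i j| ≤ vecNorm1 (w i) :=
        Finset.single_le_sum (f := fun k => |w i k|) (fun _ _ => abs_nonneg _)
          (Finset.mem_univ j)
      have hβ2 : β ^ 2 ≤ βi i ^ 2 := pow_le_pow_left₀ hβ.le (hββi i) 2
      have hnum : 2 * gW (w i) (t i) (βi i) x * |t i - w i ⬝ᵥ x|
          ≤ 2 * (|t i| + γ * vecNorm1 (w i)) := by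
        calc 2 * gW (w i) (t i) (βi i) x * |t i - w i ⬝ᵥ x|
            ≤ 2 * 1 * (|t i| + γ * vecNorm1 (w i)) := by
              apply mul_le_mul (by
                have := gW_le_one (w i) (t i) (βi i) x
                linarith) he1 (abs_nonneg _) (by norm_num)
          _ = 2 * (|t i| + γ * vecNorm1 (w i)) := by ring
      calc 2 * gW (w i) (t i) (βi i) x * |t i - w i ⬝ᵥ x| / βi i ^ 2 * |w i j|
          ≤ 2 * (|t i| + γ * vecNorm1 (w i)) / β ^ 2 * vecNorm1 (w i) := by
            apply mul_le_mul _ hwj (abs_nonneg _)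
              (div_nonneg (by linarith) (sq_nonneg β))
            exact div_le_div₀ (by linarith) hnum (by positivity) hβ2
        _ = 2 * (|t i| + γ * vecNorm1 (w i)) * vecNorm1 (w i) / β ^ 2 := by ring
    have hc2 : |t i - w i ⬝ᵥ fx| * en2 (w i) ≤
        |t i| * vecNorm1 (w i) + γ * matNorm1 (vecMulVec (w i) (w i)) := by
      have h1 : |t i - w i ⬝ᵥ fx| ≤ |t i| + |w i ⬝ᵥ fx| := abs_sub _ _
      have h2 : |w i ⬝ᵥ fx| * vecNorm1 (w i) ≤ γ * matNorm1 (vecMulVec (w i) (w i)) := by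
        calc |w i ⬝ᵥ fx| * vecNorm1 (w i)
            ≤ (∑ k, |w i k| * |fx k|) * vecNorm1 (w i) := by
              apply mul_le_mul_of_nonneg_right _ (vecNorm1_nonneg _)
              calc |w i ⬝ᵥ fx| ≤ ∑ k, |w i k * fx k| := by
                    rw [dotProduct]; exact Finset.abs_sum_le_sum_abs _ _
                _ = ∑ k, |w i k| * |fx k| := by simp [abs_mul]
          _ = ∑ k, |fx k| * (|w i k| * vecNorm1 (w i)) := by
              rw [Finset.sum_mul]
              apply Finset.sum_congr rfl
              intros; ring
          _ ≤ ∑ k, |fx k| * matNorm1 (vecMulVec (w i) (w i)) := by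
              apply Finset.sum_le_sum
              intro k _
              exact mul_le_mul_of_nonneg_left (col_le_matNorm1 (w i) k) (abs_nonneg _)
          _ = vecNorm1 fx * matNorm1 (vecMulVec (w i) (w i)) := by
              rw [vecNorm1, ← Finset.sum_mul]
          _ ≤ γ * matNorm1 (vecMulVec (w i) (w i)) :=
              mul_le_mul_of_nonneg_right part1 (hmatN i)
      calc |t i - w i ⬝ᵥ fx| * en2 (w i)
          ≤ (|t i| + |w i ⬝ᵥ fx|) * vecNorm1 (w i) := by
            apply mul_le_mul h1 (en2_le_vecNorm1 _) (en2_nonneg _)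
            positivity
        _ = |t i| * vecNorm1 (w i) + |w i ⬝ᵥ fx| * vecNorm1 (w i) := by ring
        _ ≤ |t i| * vecNorm1 (w i) + γ * matNorm1 (vecMulVec (w i) (w i)) :=
            add_le_add_right h2 _
    calc |coefC w t βi x i * w i j * (t i - w i ⬝ᵥ fx)| * en2 (w i)
        = |coefC w t βi x i * w i j| * (|t i - w i ⬝ᵥ fx| * en2 (w i)) := by
          rw [abs_mul]; ring
      _ ≤ (2 * (|t i| + γ * vecNorm1 (w i)) * vecNorm1 (w i) / β ^ 2) *
          (|t i| * vecNorm1 (w i) + γ * matNorm1 (vecMulVec (w i) (w i))) := by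
          apply mul_le_mul hc1 hc2 (mul_nonneg (abs_nonneg _) (en2_nonneg _))
            (div_nonneg (mul_nonneg (mul_nonneg (by norm_num) hA) hwn) (sq_nonneg β))
      _ = 2 * ((|t i| + γ * vecNorm1 (w i)) * vecNorm1 (w i) *
          (γ * matNorm1 (vecMulVec (w i) (w i)) + |t i| * vecNorm1 (w i))) / β ^ 2 := by
          ring
  -- assemble part 2
  refine le_trans (vecNorm1_le_sqrt_mul_en2 _) (le_trans ?_ hψβ)
  have hsum : ∑ i, 2 * ((|t i| + γ * vecNorm1 (w i)) * vecNorm1 (w i) *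
      (γ * matNorm1 (vecMulVec (w i) (w i)) + |t i| * vecNorm1 (w i))) / β ^ 2
      = 2 * (∑ i, (|t i| + γ * vecNorm1 (w i)) * vecNorm1 (w i) *
      (γ * matNorm1 (vecMulVec (w i) (w i)) + |t i| * vecNorm1 (w i))) / β ^ 2 := by
    rw [Finset.mul_sum, Finset.sum_div]
  have hfinal : Real.sqrt ↑n * en2 ((Rmat w t βi x)⁻¹ *ᵥ p2) ≤
      2 * Real.sqrt ↑n * (∑ i, (|t i| + γ * vecNorm1 (w i)) * vecNorm1 (w i) *
        (γ * matNorm1 (vecMulVec (w i) (w i)) + |t i| * vecNorm1 (w i))) /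
      (β ^ 2 * lambdaMin M) := by
    have h1 : en2 ((Rmat w t βi x)⁻¹ *ᵥ p2) ≤
        (2 * (∑ i, (|t i| + γ * vecNorm1 (w i)) * vecNorm1 (w i) *
        (γ * matNorm1 (vecMulVec (w i) (w i)) + |t i| * vecNorm1 (w i))) / β ^ 2) /
        lambdaMin M := by
      refine hen2q.trans ?_
      exact (div_le_div_iff_of_pos_right hlam).mpr (hp2bound.trans (le_of_eq hsum))
    refine (mul_le_mul_of_nonneg_left h1 (Real.sqrt_nonneg _)).trans (le_of_eq ?_)
    field_simp
  exact hfinal
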